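/- Let A = conv(Y) + cone(V) ⊆ ℝᵈ be a V-polyhedron, where Y = {y₁, …, y_p} is a finite nonempty set of points and V = {v₁, …, v_q} a finite set of vectors. Then the polar dual of A with respect to the origin is the H-polyhedron A* = {x ∈ ℝᵈ : ⟪yᵢ, x⟫ ≤ 1 for i = 1, …, p, and ⟪vⱼ, x⟫ ≤ 0 for j = 1, …, q}. Moreover, if A has nonempty interior and the origin belongs to the interior of A, then A* is bounded, i.e., A* is an H-polytope. -/

import Mathlib

/-!
A point `x` lies in the polar of `conv(Y) + cone(V)` iff `⟪c + w, x⟫ ≤ 1` for all `c` and `w`.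
Taking `w = 0` gives the conditions on `Y`; fixing some `y ∈ Y` and letting `w = t • v` with
`t → ∞` forces `⟪v, x⟫ ≤ 0`. Conversely the half-space `{⟪·, x⟫ ≤ 1}` is convex and the
functional `⟪·, x⟫` is nonpositive on the cone. If `closedBall 0 r ⊆ A`, testing `x ∈ A*`
against `(r / ‖x‖) • x ∈ A` gives `r ‖x‖ ≤ 1`, so `A*` is bounded.
-/

open RealInnerProductSpace Pointwise

/-- The polar dual of `A ⊆ ℝᵈ` with respect to the origin. -/
def polarDual {d : ℕ} (A : Set (EuclideanSpace ℝ (Fin d))) :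
    Set (EuclideanSpace ℝ (Fin d)) :=
  {b | ∀ a ∈ A, ⟪a, b⟫ ≤ 1}

/-- The cone (set of nonnegative linear combinations) generated by the vectors
`v 0, …, v (q-1)`. -/
def coneOf {d q : ℕ} (v : Fin q → EuclideanSpace ℝ (Fin d)) :
    Set (EuclideanSpace ℝ (Fin d)) :=
  {x | ∃ μ : Fin q → ℝ, (∀ j, 0 ≤ μ j) ∧ x = ∑ j, μ j • v j}

section InnerProductSpace

variable {E : Type*} [NormedAddCommGroup E] [InnerProductSpace ℝ E]

theorem convexHull_subset_setOf_inner_le {Y : Set E} {x : E} {r : ℝ}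
    (hY : ∀ y ∈ Y, ⟪y, x⟫ ≤ r) : convexHull ℝ Y ⊆ {c | ⟪c, x⟫ ≤ r} :=
  convexHull_min hY <| convex_halfSpace_le
    ⟨fun a b => inner_add_left a b x, fun t a => real_inner_smul_left a x t⟩ r

end InnerProductSpace

theorem nonpos_of_forall_nonneg_add_mul_le {b c r : ℝ} (h : ∀ t : ℝ, 0 ≤ t → b + t * c ≤ r) :
    c ≤ 0 := by
  by_contra! hc
  have hmul : (|r - b| + 1) / c * c = |r - b| + 1 := div_mul_cancel₀ _ hc.ne'
  have := h ((|r - b| + 1) / c) (by positivity)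
  linarith [le_abs_self (r - b)]

section Euclidean

variable {d q : ℕ}

theorem zero_mem_coneOf (v : Fin q → EuclideanSpace ℝ (Fin d)) : 0 ∈ coneOf v :=
  ⟨0, fun _ => le_rfl, by simp⟩

theorem smul_mem_coneOf (v : Fin q → EuclideanSpace ℝ (Fin d)) (j : Fin q) {t : ℝ}
    (ht : 0 ≤ t) : t • v j ∈ coneOf v :=
  ⟨Pi.single j t, fun k => by by_cases hk : k = j <;> simp [hk, ht], by simp [Pi.single_apply]⟩

theorem inner_nonpos_of_mem_coneOf {v : Fin q → EuclideanSpace ℝ (Fin d)}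
    {x w : EuclideanSpace ℝ (Fin d)} (hv : ∀ j, ⟪v j, x⟫ ≤ 0) (hw : w ∈ coneOf v) :
    ⟪w, x⟫ ≤ 0 := by
  obtain ⟨μ, hμ, rfl⟩ := hw
  rw [sum_inner]
  exact Finset.sum_nonpos fun j _ => by
    rw [real_inner_smul_left]
    exact mul_nonpos_of_nonneg_of_nonpos (hμ j) (hv j)

theorem polarDual_convexHull_add_coneOf {Y : Set (EuclideanSpace ℝ (Fin d))}
    (hY : Y.Nonempty) (v : Fin q → EuclideanSpace ℝ (Fin d)) :
    polarDual (convexHull ℝ Y + coneOf v) =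
      {x | (∀ y ∈ Y, ⟪y, x⟫ ≤ 1) ∧ ∀ j, ⟪v j, x⟫ ≤ 0} := by
  ext x
  constructor
  · intro hx
    have hY_le : ∀ y ∈ Y, ⟪y, x⟫ ≤ 1 := fun y hy => by
      simpa using hx (y + 0) (Set.add_mem_add (subset_convexHull ℝ Y hy) (zero_mem_coneOf v))
    refine ⟨hY_le, fun j => ?_⟩
    obtain ⟨y₀, hy₀⟩ := hY
    refine nonpos_of_forall_nonneg_add_mul_le (b := ⟪y₀, x⟫) (r := 1) fun t ht => ?_
    have := hx (y₀ + t • v j)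
      (Set.add_mem_add (subset_convexHull ℝ Y hy₀) (smul_mem_coneOf v j ht))
    rwa [inner_add_left, real_inner_smul_left] at this
  · rintro ⟨hY_le, hv⟩ _ ⟨c, hc, w, hw, rfl⟩
    calc ⟪c + w, x⟫ = ⟪c, x⟫ + ⟪w, x⟫ := inner_add_left c w x
      _ ≤ 1 + 0 :=
        add_le_add (convexHull_subset_setOf_inner_le hY_le hc) (inner_nonpos_of_mem_coneOf hv hw)
      _ = 1 := add_zero 1

theorem polarDual_subset_closedBall {A : Set (EuclideanSpace ℝ (Fin d))} {r : ℝ} (hr : 0 < r)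
    (hA : Metric.closedBall 0 r ⊆ A) : polarDual A ⊆ Metric.closedBall 0 r⁻¹ := by
  intro x hx
  rw [mem_closedBall_zero_iff]
  rcases eq_or_ne x 0 with rfl | hx0
  · simpa using hr.le
  have hnx : 0 < ‖x‖ := norm_pos_iff.mpr hx0
  have hmem : (r / ‖x‖) • x ∈ A := hA <| by
    rw [mem_closedBall_zero_iff, norm_smul, Real.norm_of_nonneg (by positivity),
      div_mul_cancel₀ r hnx.ne']
  have hle := hx _ hmem
  rw [real_inner_smul_left, real_inner_self_eq_norm_mul_norm, ← mul_assoc,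
    div_mul_cancel₀ r hnx.ne'] at hle
  rwa [← le_div_iff₀' hr, ← inv_eq_one_div] at hle

theorem isBounded_polarDual_of_zero_mem_interior {A : Set (EuclideanSpace ℝ (Fin d))}
    (h0 : 0 ∈ interior A) : Bornology.IsBounded (polarDual A) := by
  obtain ⟨r, hr, hball⟩ := Metric.nhds_basis_closedBall.mem_iff.mp (mem_interior_iff_mem_nhds.mp h0)
  exact Metric.isBounded_closedBall.subset (polarDual_subset_closedBall hr hball)

end Euclidean

theorem polarDual_vPolyhedron (d p q : ℕ) (hp : 0 < p)
    (y : Fin p → EuclideanSpace ℝ (Fin d)) (v : Fin q → EuclideanSpace ℝ (Fin d))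
    (A : Set (EuclideanSpace ℝ (Fin d)))
    (hA : A = convexHull ℝ (Set.range y) + coneOf v) :
    (polarDual A = {x : EuclideanSpace ℝ (Fin d) |
        (∀ i, ⟪y i, x⟫ ≤ 1) ∧ ∀ j, ⟪v j, x⟫ ≤ 0}) ∧
    ((interior A).Nonempty → (0 : EuclideanSpace ℝ (Fin d)) ∈ interior A →
      Bornology.IsBounded (polarDual A)) := by
  refine ⟨?_, fun _ h0 => isBounded_polarDual_of_zero_mem_interior h0⟩
  rw [hA, polarDual_convexHull_add_coneOf (Set.range_nonempty_iff_nonempty.mpr ⟨⟨0, hp⟩⟩) v]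
  simp only [Set.forall_mem_range]
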